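/- Let Γ̄ be an orbifold group, ρ̄: Γ̄ → Homeo(S¹) a (μ,τ,σ)-representation, and I₀ a periodic gap whose stabilizer is the cyclic subgroup generated by a boundary generator c_i. Let f₀ and g₀ be homeomorphisms of the closure of I₀ coinciding with ρ̄(c_i) on ∂I₀, and suppose there is a continuous, surjective, weakly monotone, orientation-preserving map φ₀: I₀ → I₀ with g₀∘φ₀ = φ₀∘f₀ on I₀ (a semi-conjugacy from f₀ to g₀). Let ρ̄′₁ be a modification of ρ̄ on I₀ by f₀ and ρ̄′₂ a modification of ρ̄ on I₀ by g₀. Then φ₀ extends to a continuous, surjective, weakly monotone degree-one map φ: S¹ → S¹, equal to the identity on S¹ ∖ 𝔍, which is a semi-conjugacy from ρ̄′₁ to ρ̄′₂: φ∘ρ̄′₁(γ̄) = ρ̄′₂(γ̄)∘φ for every γ̄ ∈ Γ̄. -/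

import Mathlib

/-!
On the gap `σ(γ) I₀` put `φ = ρ'₂(γ) ∘ φ₀ ∘ ρ'₁(γ)⁻¹`, and let `φ` be the identity off `𝔍`.
Two choices of `γ` differ by a power of `c_i`, and `φ₀` semiconjugates `ρ'₁(c_i) = f₀` to
`ρ'₂(c_i) = g₀` on `I₀`, so `φ` is well defined; it is equivariant because the two modifications
agree off `𝔍`. The two modifications also agree on `μ`, which has at least three points, so
`ρ'₁(γ)` and `ρ'₂(γ)` have the same orientation and `φ` is a continuous, surjective, weakly monotone
self-map of every gap. Such gap-wise maps glue: lifting `φ` to `ℝ` one component of the preimage of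
`𝔍` at a time gives a monotone surjective map commuting with `t ↦ t + 1`, hence a continuous one.
-/

open Set Filter Topology
open scoped commutatorElement

noncomputable section

namespace PAFlow

/-- The circle, realized as `ℝ / ℤ`. -/
abbrev S1 : Type := AddCircle (1 : ℝ)

instance {α : Type*} [TopologicalSpace α] : Group (α ≃ₜ α) where
  mul f g := g.trans f
  one := Homeomorph.refl α
  inv := Homeomorph.symm
  mul_assoc f g h := Homeomorph.ext fun _ => rfl
  one_mul f := Homeomorph.ext fun _ => rfl
  mul_one f := Homeomorph.ext fun _ => rfl
  inv_mul_cancel f := Homeomorph.ext fun x => f.symm_apply_apply x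

/-- The canonical representative in `[0,1)` of a point of the circle. -/
noncomputable def pos1 (x : S1) : ℝ := (AddCircle.equivIco 1 0 x : ℝ)

/-- The open positively-oriented arc from `a` to `c`; when `a = c` it is the complement
of `{a}` (full circle minus the point). -/
def oArc (a c : S1) : Set S1 :=
  if a = c then {a}ᶜ else {b : S1 | 0 < pos1 (b - a) ∧ pos1 (b - a) < pos1 (c - a)}

/-- The closed positively-oriented arc from `a` to `c`; when `a = c` it is the whole circle. -/
def cArc (a c : S1) : Set S1 :=
  if a = c then Set.univ else {b : S1 | pos1 (b - a) ≤ pos1 (c - a)}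

/-- A homeomorphism of the circle preserves orientation if it preserves
(strict) positively-oriented arcs. -/
def OrientPres (f : S1 ≃ₜ S1) : Prop :=
  ∀ a b c : S1, b ∈ oArc a c → f b ∈ oArc (f a) (f c)

/-- A homeomorphism of the circle reverses orientation if it reverses
(strict) positively-oriented arcs. -/
def OrientRev (f : S1 ≃ₜ S1) : Prop :=
  ∀ a b c : S1, b ∈ oArc a c → f b ∈ oArc (f c) (f a)

/-- A gap of `μ` is a connected component of the complement of `μ`. -/
def IsGap (μ : Set S1) (I : Set S1) : Prop :=
  ∃ x ∈ μᶜ, I = connectedComponentIn μᶜ x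

/-- The type of gaps of `μ`. -/
abbrev Gap (μ : Set S1) : Type := {I : Set S1 // IsGap μ I}

/-- The data of the finite-order homeomorphism `τ : μ → μ`, of order `k`, fixed point free,
preserving the cyclic order, and such that the closed arcs `[τ^[i] x, τ^[i+1] x]` cover the
circle while the corresponding open arcs are pairwise disjoint. -/
structure TauData (μ : Set S1) (k : ℕ) : Type where
  τ : S1 → S1
  k_pos : 0 < k
  mapsTo : Set.MapsTo τ μ μ
  bijOn : Set.BijOn τ μ μ
  contOn : ContinuousOn τ μ
  fixfree : ∀ x ∈ μ, τ x ≠ x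
  order_k : ∀ x ∈ μ, τ^[k] x = x
  ordPres : ∀ x ∈ μ, ∀ y ∈ μ, ∀ z ∈ μ, y ∈ oArc x z → τ y ∈ oArc (τ x) (τ z)
  arcCover : ∀ x ∈ μ, (⋃ i ∈ Finset.range k, cArc (τ^[i] x) (τ^[i + 1] x)) = Set.univ
  arcDisj : ∀ x ∈ μ, ∀ i < k, ∀ j < k, i ≠ j →
    Disjoint (oArc (τ^[i] x) (τ^[i + 1] x)) (oArc (τ^[j] x) (τ^[j + 1] x))

/-- `ρ` is a `(μ,τ,σ)`-representation. -/
structure IsMTSRep {Γ : Type*} [Group Γ] (ρ : Γ →* (S1 ≃ₜ S1)) (μ : Set S1) (k : ℕ)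
    (T : TauData μ k) (σg : Γ →* Equiv.Perm (Gap μ)) : Prop where
  perfect : Perfect μ
  nonempty : μ.Nonempty
  invariant : ∀ γ : Γ, (ρ γ) '' μ = μ
  minimal : ∀ ν : Set S1, ν.Nonempty → IsClosed ν → (∀ γ : Γ, (ρ γ) '' ν ⊆ ν) → μ ⊆ ν
  orient : ∀ γ : Γ, OrientPres (ρ γ) ∨ OrientRev (ρ γ)
  commPres : ∀ γ : Γ, OrientPres (ρ γ) → ∀ x ∈ μ, ρ γ (T.τ x) = T.τ (ρ γ x)
  commRev : ∀ γ : Γ, OrientRev (ρ γ) → ∀ x ∈ μ, ρ γ (T.τ x) = (T.τ)^[k - 1] (ρ γ x)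
  gapAct : ∀ (γ : Γ) (I : Gap μ), ((σg γ I : Gap μ) : Set S1) = (ρ γ) '' (I : Set S1)

/-- The stabilizer in `Γ` of a gap `I`, for the action `σg` on gaps. -/
def gapStab {Γ : Type*} [Group Γ] {μ : Set S1} (σg : Γ →* Equiv.Perm (Gap μ)) (I : Gap μ) :
    Subgroup Γ where
  carrier := {γ : Γ | σg γ I = I}
  one_mem' := by simp
  mul_mem' := by
    intro x y hx hy
    have hx' : σg x I = I := hx
    have hy' : σg y I = I := hy
    show σg (x * y) I = I
    rw [map_mul, Equiv.Perm.mul_apply, hy', hx']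
  inv_mem' := by
    intro x hx
    have hx' : σg x I = I := hx
    show σg x⁻¹ I = I
    have h : σg x⁻¹ (σg x I) = I := by
      rw [← Equiv.Perm.mul_apply, ← map_mul]; simp
    rw [hx'] at h
    exact h

/-- The union `𝔍` of all the iterates of the gap `I₀`. -/
def gapOrbit {Γ : Type*} [Group Γ] {μ : Set S1} (σg : Γ →* Equiv.Perm (Gap μ))
    (I₀ : Gap μ) : Set S1 :=
  ⋃ γ : Γ, ((σg γ I₀ : Gap μ) : Set S1)

/-- `f` restricts to a homeomorphism of the closure of `I` (the closure being compact,
a continuous bijection of it is automatically a homeomorphism). -/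
def IsClosureHomeo (f : S1 → S1) (I : Set S1) : Prop :=
  ContinuousOn f (closure I) ∧ Set.BijOn f (closure I) (closure I)

/-- `ρ'` is a modification of `ρ` on the gap `I₀` by `f₀` (with respect to the
distinguished element `ci` generating the stabilizer of `I₀`). -/
structure IsModification {Γ : Type*} [Group Γ] (ρ ρ' : Γ →* (S1 ≃ₜ S1)) (μ : Set S1) (k : ℕ)
    (T : TauData μ k) (σg : Γ →* Equiv.Perm (Gap μ)) (I₀ : Gap μ) (ci : Γ)
    (f₀ : S1 → S1) : Prop where
  rep' : IsMTSRep ρ' μ k T σg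
  eq_off : ∀ (γ : Γ) (x : S1), x ∉ gapOrbit σg I₀ → ρ' γ x = ρ γ x
  on_gap : ∀ x ∈ (I₀ : Set S1), ρ' ci x = f₀ x

/-- The (finite) `τ`-orbit of a point. -/
def tauOrbit {μ : Set S1} {k : ℕ} (T : TauData μ k) (x : S1) : Set S1 :=
  {y : S1 | ∃ j < k, (T.τ)^[j] x = y}

/-- The limiting behaviour required of a subsequence in the (k)-convergence property:
there are two `τ`-orbits (of points `xm`, `xp` of `μ`) such that on each compact subset of
the open arc `]τ^[i] xm, τ^[i+1] xm[` the sequence converges uniformly to `τ^[i] xp`. -/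
def KConvSeq (F : ℕ → (S1 ≃ₜ S1)) (μ : Set S1) (k : ℕ) (τ : S1 → S1) : Prop :=
  ∃ xm ∈ μ, ∃ xp ∈ μ, ∀ i < k, ∀ K : Set S1,
    K ⊆ oArc (τ^[i] xm) (τ^[i + 1] xm) → IsCompact K →
      TendstoUniformlyOn (fun n x => (F n) x) (fun _ => τ^[i] xp) atTop K

/-- The (discrete) (k)-convergence property. -/
def HasKConv {Γ : Type*} [Group Γ] (ρ : Γ →* (S1 ≃ₜ S1)) (μ : Set S1) (k : ℕ)
    (τ : S1 → S1) : Prop :=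
  ∀ γs : ℕ → Γ, ∃ φ : ℕ → ℕ, StrictMono φ ∧
    ((∀ m n : ℕ, ρ (γs (φ m)) = ρ (γs (φ n))) ∨
      KConvSeq (fun n => ρ (γs (φ n))) μ k τ)

/-- The almost (k)-convergence property. -/
def HasAlmostKConv {Γ : Type*} [Group Γ] (ρ : Γ →* (S1 ≃ₜ S1)) (μ : Set S1) (k : ℕ)
    (τ : S1 → S1) (σg : Γ →* Equiv.Perm (Gap μ)) : Prop :=
  ∀ γs : ℕ → Γ, ∃ φ : ℕ → ℕ, StrictMono φ ∧
    ((∀ m n : ℕ, ρ (γs (φ m)) = ρ (γs (φ n))) ∨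
      (∃ a γ : Γ, (∃ I : Gap μ, σg γ I = I) ∧
        ∃ p : ℕ → ℤ, ∀ n : ℕ, ρ (γs (φ n)) = ρ (γ ^ (p n) * a)) ∨
      KConvSeq (fun n => ρ (γs (φ n))) μ k τ)

/-- `x` is a topologically attracting fixed point of `f`. -/
def TopAttracting (f : S1 → S1) (x : S1) : Prop :=
  f x = x ∧ ∃ U ∈ 𝓝 x, TendstoUniformlyOn (fun n y => f^[n] y) (fun _ => x) atTop U

/-- `x` is a topologically hyperbolic (attracting or repelling) fixed point of the
homeomorphism `f`. -/
def HypFixed (f : S1 ≃ₜ S1) (x : S1) : Prop :=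
  TopAttracting f x ∨ TopAttracting f.symm x

/-- `x` is a topologically attracting fixed point of `f` within the set `s`. -/
def TopAttractingOn (f : S1 → S1) (s : Set S1) (x : S1) : Prop :=
  f x = x ∧ ∃ U ∈ 𝓝[s] x, TendstoUniformlyOn (fun n y => f^[n] y) (fun _ => x) atTop U

/-- `ρ` is `μ`-faithful. -/
def MuFaithful {Γ : Type*} [Group Γ] (ρ : Γ →* (S1 ≃ₜ S1)) (μ : Set S1) : Prop :=
  ∀ γ : Γ, (∀ x ∈ μ, ρ γ x = x) → γ = 1

/-- `ρ` is non-elementary: it has no finite orbit in the circle. -/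
def NonElementary {Γ : Type*} [Group Γ] (ρ : Γ →* (S1 ≃ₜ S1)) : Prop :=
  ∀ x : S1, ¬ (Set.range fun γ : Γ => ρ γ x).Finite

/-- A presentation of a group `Γ` as the fundamental group of a compact 2-orbifold with
nonempty boundary:  generators `a i`, `b i` (handles, or crosscaps when non-orientable, in
which case the `b i` are trivial), torsion generators `d j` of orders `α j ≥ 2`, and
boundary generators `c i`, `q ≥ 1`, subject to the defining relations; being a presentation
is expressed by the universal lifting property. -/
structure OrbifoldPresentation (Γ : Type*) [Group Γ] : Type _ where
  orientable : Bool
  g : ℕ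
  p : ℕ
  q : ℕ
  a : Fin g → Γ
  b : Fin g → Γ
  d : Fin p → Γ
  c : Fin q → Γ
  α : Fin p → ℕ
  q_pos : 1 ≤ q
  α_two : ∀ j, 2 ≤ α j
  b_trivial : orientable = false → ∀ i, b i = 1
  rel_d : ∀ j, d j ^ (α j) = 1
  rel_long : (List.ofFn c).prod =
    (if orientable then (List.ofFn fun i => ⁅a i, b i⁆).prod
      else (List.ofFn fun i => (a i) ^ 2).prod) * (List.ofFn d).prod
  generates : Subgroup.closure
    (Set.range a ∪ Set.range b ∪ Set.range d ∪ Set.range c) = ⊤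
  liftUnique : ∀ (H : Type) (_ : Group H) (fa fb : Fin g → H) (fd : Fin p → H)
    (fc : Fin q → H),
    (orientable = false → ∀ i, fb i = 1) →
    (∀ j, fd j ^ (α j) = 1) →
    ((List.ofFn fc).prod =
      (if orientable then (List.ofFn fun i => ⁅fa i, fb i⁆).prod
        else (List.ofFn fun i => (fa i) ^ 2).prod) * (List.ofFn fd).prod) →
    ∃! φ : Γ →* H, (∀ i, φ (a i) = fa i) ∧ (∀ i, φ (b i) = fb i) ∧
      (∀ j, φ (d j) = fd j) ∧ (∀ i, φ (c i) = fc i)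

/-- `F : ℝ → ℝ` is a lift of the circle map `f` through the projection `ℝ → ℝ/ℤ`. -/
def IsLiftOf (F : ℝ → ℝ) (f : S1 → S1) : Prop :=
  ∀ x : ℝ, ((F x : ℝ) : S1) = f ((x : ℝ) : S1)

/-- Formal letters for words in the generators of an orbifold group presentation. -/
inductive OLetter (g p : ℕ) : Type
  | ga : Fin g → Bool → OLetter g p
  | gb : Fin g → Bool → OLetter g p
  | gd : Fin p → Bool → OLetter g p

/-- Evaluation of a letter in the group. -/
def evLetter {Γ : Type*} [Group Γ] (P : OrbifoldPresentation Γ) :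
    OLetter P.g P.p → Γ
  | .ga i bb => if bb then (P.a i)⁻¹ else P.a i
  | .gb i bb => if bb then (P.b i)⁻¹ else P.b i
  | .gd j bb => if bb then (P.d j)⁻¹ else P.d j

/-- Evaluation of a word (a list of letters), multiplying from left to right. -/
def evWord {Γ : Type*} [Group Γ] (P : OrbifoldPresentation Γ)
    (w : List (OLetter P.g P.p)) : Γ :=
  (w.map (evLetter P)).prod

/-- A word is admissible if, in the non-orientable case, it uses no `b`-letters. -/
def Admissible {Γ : Type*} [Group Γ] (P : OrbifoldPresentation Γ)
    (w : List (OLetter P.g P.p)) : Prop :=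
  P.orientable = false → ∀ l ∈ w, ∀ (i : Fin P.g) (bb : Bool), l ≠ OLetter.gb i bb

/-- The distinguished word `w₀` representing `c₁`:
`[a₁,b₁]⋯[a_g,b_g]d₁⋯d_p` in the orientable case, `a₁²⋯a_g²d₁⋯d_p` otherwise. -/
def w0 {Γ : Type*} [Group Γ] (P : OrbifoldPresentation Γ) : List (OLetter P.g P.p) :=
  (if P.orientable then
    (List.ofFn fun i : Fin P.g =>
      ([OLetter.ga i false, OLetter.gb i false, OLetter.ga i true, OLetter.gb i true] :
        List (OLetter P.g P.p))).flatten
   else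
    (List.ofFn fun i : Fin P.g =>
      ([OLetter.ga i false, OLetter.ga i false] : List (OLetter P.g P.p))).flatten)
  ++ (List.ofFn fun j : Fin P.p => OLetter.gd j false)

/-- The length `ℓ` of `w₀`. -/
def w0Len {Γ : Type*} [Group Γ] (P : OrbifoldPresentation Γ) : ℕ :=
  (if P.orientable then 4 * P.g else 2 * P.g) + P.p

/-- Iterated images `I_n` of the gap `I₀` under the successive elements of the list `l`:
`I_{n+1} = σ(l_n) I_n`. -/
def gapSeq {Γ : Type*} [Group Γ] {μ : Set S1} (σg : Γ →* Equiv.Perm (Gap μ))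
    (I₀ : Gap μ) (l : List Γ) : ℕ → Gap μ
  | 0 => I₀
  | n + 1 => σg (l.getD n 1) (gapSeq σg I₀ l n)

instance : LocallyConnectedSpace S1 :=
  (QuotientAddGroup.isQuotientMap_mk _).isCoinducing.locallyConnectedSpace

lemma pos1_coe (r : ℝ) : pos1 r = Int.fract r := by
  have h := AddCircle.coe_equivIco_mk_apply (p := (1 : ℝ)) r
  simp only [div_one, mul_one] at h
  exact h

lemma coe_pos1 (x : S1) : ((pos1 x : ℝ) : S1) = x :=
  (AddCircle.equivIco 1 0).symm_apply_apply x

lemma pos1_mem_Ico (x : S1) : pos1 x ∈ Ico 0 1 := by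
  simpa [pos1] using (AddCircle.equivIco 1 0 x).2

lemma pos1_nonneg (x : S1) : 0 ≤ pos1 x := (pos1_mem_Ico x).1

lemma pos1_lt_one (x : S1) : pos1 x < 1 := (pos1_mem_Ico x).2

lemma pos1_injective : Function.Injective pos1 := fun x y h => by
  rw [← coe_pos1 x, ← coe_pos1 y, h]

lemma pos1_zero : pos1 0 = 0 := by
  simpa using pos1_coe 0

lemma pos1_sub (x y : S1) : pos1 (x - y) = Int.fract (pos1 x - pos1 y) := by
  rw [← pos1_coe, AddCircle.coe_sub, coe_pos1, coe_pos1]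

lemma pos1_sub_pos {x y : S1} (h : x ≠ y) : 0 < pos1 (x - y) :=
  (pos1_nonneg _).lt_of_ne fun h0 => h <| sub_eq_zero.mp <| pos1_injective <| h0.symm.trans
    pos1_zero.symm

lemma pos1_coe_sub_coe {r s : ℝ} (h₀ : s ≤ r) (h₁ : r < s + 1) :
    pos1 ((r : S1) - s) = r - s := by
  rw [← AddCircle.coe_sub, pos1_coe, Int.fract_eq_self.mpr ⟨by linarith, by linarith⟩]

lemma coe_ne_coe_of_lt {r s : ℝ} (h : r < s) (h' : s < r + 1) : (r : S1) ≠ s := fun he =>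
  h.ne <| (AddCircle.coe_eq_coe_iff_of_mem_Ico (a := r) ⟨le_rfl, by linarith⟩
    ⟨h.le, h'⟩).mp he

lemma continuousAt_pos1 {x : S1} (hx : x ≠ 0) : ContinuousAt pos1 x :=
  continuous_subtype_val.continuousAt.comp <|
    AddCircle.continuousAt_equivIco (p := 1) 0 (by simpa using hx)

lemma exists_coe_eq_mem_Ioc (x : S1) (t : ℝ) : ∃ r ∈ Ioc (t - 1) t, (r : S1) = x :=
  ⟨t - pos1 (t - x), ⟨by linarith [pos1_lt_one (t - x)], by linarith [pos1_nonneg (t - x)]⟩,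
    by rw [AddCircle.coe_sub, coe_pos1, sub_sub_cancel]⟩

lemma cArc_self (a : S1) : cArc a a = univ := if_pos rfl

lemma mem_cArc_iff {a b c : S1} (hac : a ≠ c) : b ∈ cArc a c ↔ pos1 (b - a) ≤ pos1 (c - a) := by
  rw [cArc, if_neg hac]; rfl

lemma mem_oArc_iff {a b c : S1} (hac : a ≠ c) :
    b ∈ oArc a c ↔ 0 < pos1 (b - a) ∧ pos1 (b - a) < pos1 (c - a) := by
  rw [oArc, if_neg hac]; rfl

lemma left_mem_cArc (a c : S1) : a ∈ cArc a c := by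
  rcases eq_or_ne a c with rfl | hac
  · simp [cArc_self]
  · simpa [mem_cArc_iff hac, pos1_zero] using pos1_nonneg (c - a)

lemma right_mem_cArc (a c : S1) : c ∈ cArc a c := by
  rcases eq_or_ne a c with rfl | hac
  · simp [cArc_self]
  · exact (mem_cArc_iff hac).mpr le_rfl

lemma oArc_subset_cArc {a c : S1} (hac : a ≠ c) : oArc a c ⊆ cArc a c := fun _ hb =>
  (mem_cArc_iff hac).mpr ((mem_oArc_iff hac).mp hb).2.le

lemma mem_oArc_of_mem_cArc {a b c : S1} (hac : a ≠ c) (hb : b ∈ cArc a c) (hba : b ≠ a)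
    (hbc : b ≠ c) : b ∈ oArc a c :=
  (mem_oArc_iff hac).mpr ⟨pos1_sub_pos hba, ((mem_cArc_iff hac).mp hb).lt_of_ne
    fun he => hbc (sub_left_inj.mp (pos1_injective he))⟩

lemma not_mem_cArc_iff {a b c : S1} (hac : a ≠ c) : b ∉ cArc a c ↔ b ∈ oArc c a := by
  have hζ : 0 < pos1 (c - a) := pos1_sub_pos hac.symm
  have hac' : pos1 (a - c) = 1 - pos1 (c - a) := by
    rw [show a - c = (a - a) - (c - a) by abel, pos1_sub, sub_self, pos1_zero, zero_sub,
      Int.fract_neg, Int.fract_eq_self.mpr ⟨hζ.le, pos1_lt_one _⟩]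
    exact (Int.fract_eq_self.mpr ⟨hζ.le, pos1_lt_one _⟩).symm ▸ hζ.ne'
  have hbc : pos1 (b - c) = Int.fract (pos1 (b - a) - pos1 (c - a)) := by
    rw [← pos1_sub, sub_sub_sub_cancel_right]
  rw [mem_cArc_iff hac, mem_oArc_iff hac.symm, hac', hbc, not_le]
  have hβ := pos1_nonneg (b - a)
  have hβ' := pos1_lt_one (b - a)
  have hζ' := pos1_lt_one (c - a)
  rcases lt_trichotomy (pos1 (c - a)) (pos1 (b - a)) with h | h | h
  · rw [Int.fract_eq_self.mpr ⟨by linarith, by linarith⟩]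
    exact iff_of_true h ⟨by linarith, by linarith⟩
  · simp [h]
  · rw [← Int.fract_add_one, Int.fract_eq_self.mpr ⟨by linarith, by linarith⟩]
    exact iff_of_false h.not_gt fun h' => by linarith [h'.2]

lemma coe_mem_cArc {u v w : ℝ} (huv : u ≤ v) (hvw : v ≤ w) (hwu : w ≤ u + 1) :
    (v : S1) ∈ cArc u w := by
  rcases eq_or_ne (u : S1) w with h | h
  · simp [h, cArc_self]
  have hw : w < u + 1 := hwu.lt_of_ne fun he => h (by rw [he, AddCircle.coe_add_period])
  rw [mem_cArc_iff h, pos1_coe_sub_coe huv (by linarith), pos1_coe_sub_coe (huv.trans hvw) hw]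
  linarith

lemma coe_mem_oArc {u v w : ℝ} (huv : u < v) (hvw : v < w) (hwu : w < u + 1) :
    (v : S1) ∈ oArc u w := by
  rw [mem_oArc_iff (coe_ne_coe_of_lt (huv.trans hvw) hwu), pos1_coe_sub_coe huv.le (by linarith),
    pos1_coe_sub_coe (huv.trans hvw).le hwu]
  constructor <;> linarith

lemma exists_coe_of_mem_cArc {x y z : S1} (h : y ∈ cArc x z) :
    ∃ u v w : ℝ, u ≤ v ∧ v ≤ w ∧ w ≤ u + 1 ∧ (u : S1) = x ∧ (v : S1) = y ∧ (w : S1) = z := by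
  have hv : ((pos1 x + pos1 (y - x) : ℝ) : S1) = y := by
    rw [AddCircle.coe_add, coe_pos1, coe_pos1, add_sub_cancel]
  rcases eq_or_ne x z with rfl | hxz
  · refine ⟨pos1 x, _, pos1 x + 1, by linarith [pos1_nonneg (y - x)],
      by linarith [pos1_lt_one (y - x)], le_rfl, coe_pos1 x, hv, ?_⟩
    rw [AddCircle.coe_add_period, coe_pos1]
  · refine ⟨pos1 x, _, pos1 x + pos1 (z - x), by linarith [pos1_nonneg (y - x)],
      by linarith [(mem_cArc_iff hxz).mp h], by linarith [pos1_lt_one (z - x)], coe_pos1 x, hv, ?_⟩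
    rw [AddCircle.coe_add, coe_pos1, coe_pos1, add_sub_cancel]

lemma OrientPres.apply_mem_cArc_iff {f : S1 ≃ₜ S1} (hf : OrientPres f) {a b c : S1} :
    f b ∈ cArc (f a) (f c) ↔ b ∈ cArc a c := by
  rcases eq_or_ne a c with rfl | hac
  · simp [cArc_self]
  have hfac : f a ≠ f c := f.injective.ne hac
  refine ⟨fun h => by_contra fun hb => ?_, fun hb => ?_⟩
  · exact (not_mem_cArc_iff hfac).mpr (hf c b a ((not_mem_cArc_iff hac).mp hb)) h
  rcases eq_or_ne b a with rfl | hba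
  · exact left_mem_cArc _ _
  rcases eq_or_ne b c with rfl | hbc
  · exact right_mem_cArc _ _
  exact oArc_subset_cArc hfac (hf a b c (mem_oArc_of_mem_cArc hac hb hba hbc))

lemma OrientRev.apply_mem_cArc_iff {f : S1 ≃ₜ S1} (hf : OrientRev f) {a b c : S1} :
    f b ∈ cArc (f c) (f a) ↔ b ∈ cArc a c := by
  rcases eq_or_ne a c with rfl | hac
  · simp [cArc_self]
  have hfca : f c ≠ f a := f.injective.ne hac.symm
  refine ⟨fun h => by_contra fun hb => ?_, fun hb => ?_⟩
  · exact (not_mem_cArc_iff hfca).mpr (hf c b a ((not_mem_cArc_iff hac).mp hb)) h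
  rcases eq_or_ne b a with rfl | hba
  · exact right_mem_cArc _ _
  rcases eq_or_ne b c with rfl | hbc
  · exact left_mem_cArc _ _
  exact oArc_subset_cArc hfca (hf a b c (mem_oArc_of_mem_cArc hac hb hba hbc))

lemma OrientPres.not_orientRev_of_eqOn {f g : S1 ≃ₜ S1} (hf : OrientPres f) (hg : OrientRev g)
    {x y z : S1} (hfg : EqOn f g {x, y, z}) (hxy : x ≠ y) (hyz : y ≠ z) (hxz : x ≠ z) :
    False := by
  have key : ∀ a ∈ ({x, y, z} : Set S1), ∀ c ∈ ({x, y, z} : Set S1), a ≠ c → y ∈ oArc a c →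
      False := fun a ha c hc hac hy => by
    have hg' := hg a y c hy
    rw [← hfg ha, ← hfg hc, ← hfg (by simp)] at hg'
    exact (not_mem_cArc_iff (f.injective.ne hac)).mpr hg'
      (oArc_subset_cArc (f.injective.ne hac) (hf a y c hy))
  by_cases hy : y ∈ cArc x z
  · exact key x (by simp) z (by simp) hxz (mem_oArc_of_mem_cArc hxz hy hxy.symm hyz)
  · exact key z (by simp) x (by simp) hxz.symm ((not_mem_cArc_iff hxz).mp hy)

lemma _root_.Perfect.exists_three_ne {X : Type*} [TopologicalSpace X] [T1Space X] {μ : Set X}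
    (hμ : Perfect μ) (hne : μ.Nonempty) :
    ∃ x ∈ μ, ∃ y ∈ μ, ∃ z ∈ μ, x ≠ y ∧ y ≠ z ∧ x ≠ z := by
  obtain ⟨x, hx⟩ := hne
  have hacc := preperfect_iff_nhds.mp hμ.acc x hx
  obtain ⟨y, hyμ, hyx⟩ := hacc univ univ_mem
  obtain ⟨z, ⟨hzy, hzμ⟩, hzx⟩ := hacc {y}ᶜ (isOpen_compl_singleton.mem_nhds hyx.symm)
  exact ⟨x, hx, y, hyμ.2, z, hzμ, hyx.symm, Ne.symm hzy, hzx.symm⟩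

lemma sameOrientation_of_eqOn {f g : S1 ≃ₜ S1} (hf : OrientPres f ∨ OrientRev f)
    (hg : OrientPres g ∨ OrientRev g) {μ : Set S1} (hμ : Perfect μ) (hne : μ.Nonempty)
    (hfg : EqOn f g μ) : (OrientPres f ∧ OrientPres g) ∨ (OrientRev f ∧ OrientRev g) := by
  obtain ⟨x, hx, y, hy, z, hz, hxy, hyz, hxz⟩ := hμ.exists_three_ne hne
  have hfg' : EqOn f g {x, y, z} := hfg.mono (by simp [insert_subset_iff, hx, hy, hz])
  rcases hf with hf | hf <;> rcases hg with hg | hg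
  · exact Or.inl ⟨hf, hg⟩
  · exact (hf.not_orientRev_of_eqOn hg hfg' hxy hyz hxz).elim
  · exact (hg.not_orientRev_of_eqOn hf hfg'.symm hxy hyz hxz).elim
  · exact Or.inr ⟨hf, hg⟩

section IsLiftOf

variable {F : ℝ → ℝ} {f : S1 → S1}

lemma IsLiftOf.continuous (hF : IsLiftOf F f) (hc : Continuous F) : Continuous f :=
  (QuotientAddGroup.isQuotientMap_mk _).continuous_iff.mpr <|
    (continuous_quotient_mk'.comp hc).congr fun t => hF t

lemma IsLiftOf.surjective (hF : IsLiftOf F f) (hs : Function.Surjective F) :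
    Function.Surjective f := fun y => by
  obtain ⟨r, rfl⟩ := QuotientAddGroup.mk_surjective y
  obtain ⟨t, rfl⟩ := hs r
  exact ⟨t, (hF t).symm⟩

lemma IsLiftOf.mem_cArc (hF : IsLiftOf F f) (hmono : Monotone F)
    (hper : ∀ t, F (t + 1) = F t + 1) {x y z : S1} (h : y ∈ cArc x z) :
    f y ∈ cArc (f x) (f z) := by
  obtain ⟨u, v, w, huv, hvw, hwu, rfl, rfl, rfl⟩ := exists_coe_of_mem_cArc h
  rw [← hF, ← hF, ← hF]
  exact coe_mem_cArc (hmono huv) (hmono hvw) ((hmono hwu).trans_eq (hper u))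

end IsLiftOf

def WeaklyMonotoneOn (f : S1 → S1) (s : Set S1) : Prop :=
  ∀ x ∈ s, ∀ y ∈ s, ∀ z ∈ s, y ∈ cArc x z → f y ∈ cArc (f x) (f z)

structure MonotoneSelfMapOn (f : S1 → S1) (s : Set S1) : Prop where
  mapsTo : MapsTo f s s
  surjOn : SurjOn f s s
  continuousOn : ContinuousOn f s
  weaklyMonotoneOn : WeaklyMonotoneOn f s

lemma MonotoneSelfMapOn.congr {f g : S1 → S1} {s : Set S1} (hf : MonotoneSelfMapOn f s)
    (hfg : EqOn f g s) : MonotoneSelfMapOn g s where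
  mapsTo := hf.mapsTo.congr hfg
  surjOn := hf.surjOn.congr hfg
  continuousOn := hf.continuousOn.congr hfg.symm
  weaklyMonotoneOn x hx y hy z hz h := by
    rw [← hfg hx, ← hfg hy, ← hfg hz]
    exact hf.weaklyMonotoneOn x hx y hy z hz h

lemma MonotoneSelfMapOn.conj {f : S1 → S1} {s : Set S1} (hf : MonotoneSelfMapOn f s)
    {g h : S1 ≃ₜ S1} (hgh : h '' s = g '' s)
    (horient : (OrientPres g ∧ OrientPres h) ∨ (OrientRev g ∧ OrientRev h)) :
    MonotoneSelfMapOn (h ∘ f ∘ g.symm) (g '' s) where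
  mapsTo := by
    rintro _ ⟨a, ha, rfl⟩
    rw [← hgh]
    exact mem_image_of_mem h (by simpa using hf.mapsTo ha)
  surjOn := by
    intro y hy
    rw [← hgh] at hy
    obtain ⟨b, hb, rfl⟩ := hy
    obtain ⟨a, ha, rfl⟩ := hf.surjOn hb
    exact ⟨g a, mem_image_of_mem g ha, by simp⟩
  continuousOn := h.continuous.comp_continuousOn <| hf.continuousOn.comp
    g.symm.continuous.continuousOn fun _ ⟨a, ha, hx⟩ => by simpa [← hx] using ha
  weaklyMonotoneOn := by
    rintro _ ⟨a, ha, rfl⟩ _ ⟨b, hb, rfl⟩ _ ⟨c, hc, rfl⟩ habc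
    simp only [Function.comp_apply, Homeomorph.symm_apply_apply]
    rcases horient with ⟨hg, hh⟩ | ⟨hg, hh⟩
    · exact hh.apply_mem_cArc_iff.mpr
        (hf.weaklyMonotoneOn a ha b hb c hc (hg.apply_mem_cArc_iff.mp habc))
    · exact hh.apply_mem_cArc_iff.mpr
        (hf.weaklyMonotoneOn c hc b hb a ha (hg.apply_mem_cArc_iff.mp habc))

section ComponentLift

variable {U : Set S1} {p : S1} {φ : S1 → S1} {r s t : ℝ}

/-- For `(t : S1) ∈ U`, the component of `(↑) ⁻¹' U` through `t` is
`Ioo (leftEnd U t) (rightEnd U t)`; both are genuine endpoints as soon as `U ≠ univ`. -/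
def leftEnd (U : Set S1) (t : ℝ) : ℝ := sSup {r | r ≤ t ∧ (r : S1) ∉ U}

def rightEnd (U : Set S1) (t : ℝ) : ℝ := sInf {r | t ≤ r ∧ (r : S1) ∉ U}

lemma le_leftEnd (hrt : r ≤ t) (hr : (r : S1) ∉ U) : r ≤ leftEnd U t :=
  le_csSup ⟨t, fun _ h => h.1⟩ ⟨hrt, hr⟩

lemma rightEnd_le (htr : t ≤ r) (hr : (r : S1) ∉ U) : rightEnd U t ≤ r :=
  csInf_le ⟨t, fun _ h => h.1⟩ ⟨htr, hr⟩

lemma coe_mem_of_mem_Ioo (hr : r ∈ Ioo (leftEnd U t) (rightEnd U t)) : (r : S1) ∈ U := by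
  by_contra h
  rcases le_total r t with hrt | htr
  · exact (le_leftEnd hrt h).not_gt hr.1
  · exact (rightEnd_le htr h).not_gt hr.2

lemma sub_one_lt_leftEnd (hp : p ∉ U) (t : ℝ) : t - 1 < leftEnd U t := by
  obtain ⟨r, hr, rfl⟩ := exists_coe_eq_mem_Ioc p t
  exact hr.1.trans_le (le_leftEnd hr.2 hp)

lemma leftEnd_spec (hU : IsOpen U) (hp : p ∉ U) (t : ℝ) :
    leftEnd U t ≤ t ∧ (leftEnd U t : S1) ∉ U := by
  have hclosed : IsClosed {r : ℝ | r ≤ t ∧ (r : S1) ∉ U} :=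
    isClosed_Iic.inter (hU.isClosed_compl.preimage continuous_quotient_mk')
  obtain ⟨r, hr, rfl⟩ := exists_coe_eq_mem_Ioc p t
  exact hclosed.csSup_mem ⟨r, hr.2, hp⟩ ⟨t, fun _ h => h.1⟩

lemma rightEnd_spec (hU : IsOpen U) (hp : p ∉ U) (t : ℝ) :
    t ≤ rightEnd U t ∧ (rightEnd U t : S1) ∉ U := by
  have hclosed : IsClosed {r : ℝ | t ≤ r ∧ (r : S1) ∉ U} :=
    isClosed_Ici.inter (hU.isClosed_compl.preimage continuous_quotient_mk')
  obtain ⟨r, hr, rfl⟩ := exists_coe_eq_mem_Ioc p (t + 1)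
  exact hclosed.csInf_mem ⟨r, by linarith [hr.1], hp⟩ ⟨t, fun _ h => h.1⟩

lemma leftEnd_lt (hU : IsOpen U) (hp : p ∉ U) (ht : (t : S1) ∈ U) : leftEnd U t < t :=
  (leftEnd_spec hU hp t).1.lt_of_ne fun h => (leftEnd_spec hU hp t).2 (by rwa [h])

lemma lt_rightEnd (hU : IsOpen U) (hp : p ∉ U) (ht : (t : S1) ∈ U) : t < rightEnd U t :=
  (rightEnd_spec hU hp t).1.lt_of_ne fun h => (rightEnd_spec hU hp t).2 (by rwa [← h])

lemma rightEnd_le_leftEnd_add_one (hU : IsOpen U) (hp : p ∉ U) (t : ℝ) :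
    rightEnd U t ≤ leftEnd U t + 1 :=
  rightEnd_le (by linarith [sub_one_lt_leftEnd hp t])
    (by rw [AddCircle.coe_add_period]; exact (leftEnd_spec hU hp t).2)

lemma leftEnd_eq_of_mem_Ioo (hU : IsOpen U) (hp : p ∉ U)
    (hr : r ∈ Ioo (leftEnd U t) (rightEnd U t)) : leftEnd U r = leftEnd U t := by
  refine le_antisymm (not_lt.mp fun hlt => (leftEnd_spec hU hp r).2 ?_)
    (le_leftEnd hr.1.le (leftEnd_spec hU hp t).2)
  exact coe_mem_of_mem_Ioo ⟨hlt, (leftEnd_spec hU hp r).1.trans_lt hr.2⟩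

lemma leftEnd_add_one (hU : IsOpen U) (hp : p ∉ U) (t : ℝ) :
    leftEnd U (t + 1) = leftEnd U t + 1 := by
  refine le_antisymm ?_ (le_leftEnd (by linarith [(leftEnd_spec hU hp t).1])
    (by rw [AddCircle.coe_add_period]; exact (leftEnd_spec hU hp t).2))
  have h := leftEnd_spec hU hp (t + 1)
  have hle : leftEnd U (t + 1) - 1 ≤ leftEnd U t :=
    le_leftEnd (by linarith [h.1]) (by
      rw [← AddCircle.coe_add_period 1 (leftEnd U (t + 1) - 1), sub_add_cancel]; exact h.2)
  linarith

lemma image_Ioo_eq_connectedComponentIn (hU : IsOpen U) (hp : p ∉ U) (ht : (t : S1) ∈ U) :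
    (↑) '' Ioo (leftEnd U t) (rightEnd U t) = connectedComponentIn U (t : S1) := by
  set A := leftEnd U t
  set B := rightEnd U t
  have htAB : t ∈ Ioo A B := ⟨leftEnd_lt hU hp ht, lt_rightEnd hU hp ht⟩
  refine subset_antisymm ((isPreconnected_Ioo.image _ continuous_quotient_mk'.continuousOn)
    |>.subset_connectedComponentIn (mem_image_of_mem _ htAB)
      (image_subset_iff.mpr fun r hr => coe_mem_of_mem_Ioo hr)) ?_
  have hcover : connectedComponentIn U (t : S1) ⊆
      ((↑) '' Ioo A B : Set S1) ∪ (↑) '' Ioo B (A + 1) := by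
    intro y hy
    obtain ⟨r, hr, rfl⟩ := exists_coe_eq_mem_Ioc y (A + 1)
    have hyU := connectedComponentIn_subset _ _ hy
    have hrA : r ≠ A + 1 := by
      rintro rfl
      rw [AddCircle.coe_add_period] at hyU
      exact (leftEnd_spec hU hp t).2 hyU
    have hrB : r ≠ B := by
      rintro rfl
      exact (rightEnd_spec hU hp t).2 hyU
    rcases hrB.lt_or_gt with h | h
    · exact Or.inl ⟨r, ⟨by linarith [hr.1], h⟩, rfl⟩
    · exact Or.inr ⟨r, ⟨h, hr.2.lt_of_ne hrA⟩, rfl⟩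
  have hdisj : Disjoint ((↑) '' Ioo A B : Set S1) ((↑) '' Ioo B (A + 1)) := by
    rw [Set.disjoint_left]
    rintro _ ⟨r₁, hr₁, rfl⟩ ⟨r₂, hr₂, he⟩
    exact coe_ne_coe_of_lt (hr₁.2.trans hr₂.1) (by linarith [hr₁.1, hr₂.2]) he.symm
  exact isPreconnected_connectedComponentIn.subset_left_of_subset_union
    (QuotientAddGroup.isOpenMap_coe _ isOpen_Ioo) (QuotientAddGroup.isOpenMap_coe _ isOpen_Ioo)
    hdisj hcover ⟨t, mem_connectedComponentIn ht, mem_image_of_mem _ htAB⟩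

open Classical in
def componentLift (U : Set S1) (φ : S1 → S1) (t : ℝ) : ℝ :=
  if (t : S1) ∈ U then leftEnd U t + pos1 (φ t - leftEnd U t) else t

lemma componentLift_of_mem (ht : (t : S1) ∈ U) :
    componentLift U φ t = leftEnd U t + pos1 (φ t - leftEnd U t) := if_pos ht

lemma componentLift_of_not_mem (ht : (t : S1) ∉ U) : componentLift U φ t = t := if_neg ht

lemma isLiftOf_componentLift (hoff : ∀ x ∉ U, φ x = x) : IsLiftOf (componentLift U φ) φ := by
  intro t
  by_cases ht : (t : S1) ∈ U
  · rw [componentLift_of_mem ht, AddCircle.coe_add, coe_pos1, add_sub_cancel]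
  · rw [componentLift_of_not_mem ht, hoff _ ht]

lemma componentLift_eq (ht : (t : S1) ∈ U) (h₀ : leftEnd U t ≤ r) (h₁ : r < leftEnd U t + 1)
    (hφ : φ t = r) : componentLift U φ t = r := by
  rw [componentLift_of_mem ht, hφ, pos1_coe_sub_coe h₀ h₁, add_sub_cancel]

lemma componentLift_mem_Ioo (hU : IsOpen U) (hp : p ∉ U)
    (hφ : ∀ x ∈ U, MonotoneSelfMapOn φ (connectedComponentIn U x)) (ht : (t : S1) ∈ U) :
    componentLift U φ t ∈ Ioo (leftEnd U t) (rightEnd U t) := by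
  have hφt := (hφ t ht).mapsTo (mem_connectedComponentIn ht)
  rw [← image_Ioo_eq_connectedComponentIn hU hp ht] at hφt
  obtain ⟨r, hr, hφr⟩ := hφt
  rwa [componentLift_eq ht hr.1.le (hr.2.trans_le (rightEnd_le_leftEnd_add_one hU hp t))
    hφr.symm]

lemma componentLift_add_one (hU : IsOpen U) (hp : p ∉ U) (t : ℝ) :
    componentLift U φ (t + 1) = componentLift U φ t + 1 := by
  by_cases ht : (t : S1) ∈ U
  · have ht' : ((t + 1 : ℝ) : S1) ∈ U := by rwa [AddCircle.coe_add_period]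
    rw [componentLift_of_mem ht, componentLift_of_mem ht', leftEnd_add_one hU hp,
      AddCircle.coe_add_period, AddCircle.coe_add_period]
    ring
  · have ht' : ((t + 1 : ℝ) : S1) ∉ U := by rwa [AddCircle.coe_add_period]
    rw [componentLift_of_not_mem ht, componentLift_of_not_mem ht']

lemma le_componentLift (hU : IsOpen U) (hp : p ∉ U)
    (hφ : ∀ x ∈ U, MonotoneSelfMapOn φ (connectedComponentIn U x)) (hrt : r ≤ t)
    (hr : (r : S1) ∉ U) : r ≤ componentLift U φ t := by
  by_cases ht : (t : S1) ∈ U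
  · exact (le_leftEnd hrt hr).trans (componentLift_mem_Ioo hU hp hφ ht).1.le
  · rwa [componentLift_of_not_mem ht]

lemma componentLift_le (hU : IsOpen U) (hp : p ∉ U)
    (hφ : ∀ x ∈ U, MonotoneSelfMapOn φ (connectedComponentIn U x)) (hsr : s ≤ r)
    (hr : (r : S1) ∉ U) : componentLift U φ s ≤ r := by
  by_cases hs : (s : S1) ∈ U
  · exact (componentLift_mem_Ioo hU hp hφ hs).2.le.trans (rightEnd_le hsr hr)
  · rwa [componentLift_of_not_mem hs]

lemma coe_mem_connectedComponentIn (hU : IsOpen U) (hp : p ∉ U) (hs : (s : S1) ∈ U)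
    (hr : r ∈ Ioo (leftEnd U s) (rightEnd U s)) : (r : S1) ∈ connectedComponentIn U (s : S1) := by
  rw [← image_Ioo_eq_connectedComponentIn hU hp hs]
  exact mem_image_of_mem _ hr

lemma continuousOn_componentLift (hU : IsOpen U) (hp : p ∉ U)
    (hφ : ∀ x ∈ U, MonotoneSelfMapOn φ (connectedComponentIn U x)) (hs : (s : S1) ∈ U) :
    ContinuousOn (componentLift U φ) (Ioo (leftEnd U s) (rightEnd U s)) := by
  set A := leftEnd U s
  have hC := fun r (hr : r ∈ Ioo A (rightEnd U s)) => coe_mem_connectedComponentIn hU hp hs hr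
  refine ContinuousOn.congr (f := fun r : ℝ => A + pos1 (φ r - A)) (fun r hr => ?_) ?_
  · have hne : φ r - A ≠ 0 := sub_ne_zero.mpr fun he => (leftEnd_spec hU hp s).2 <|
      he ▸ connectedComponentIn_subset _ _ ((hφ s hs).mapsTo (hC r hr))
    have hdiff : ContinuousWithinAt (fun r : ℝ => φ r - (A : S1)) (Ioo A (rightEnd U s)) r :=
      (((hφ s hs).continuousOn.comp continuous_quotient_mk'.continuousOn hC) r hr).sub
        continuousWithinAt_const
    exact continuousWithinAt_const.add (ContinuousAt.comp_continuousWithinAt (g := pos1)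
      (f := fun r : ℝ => φ r - (A : S1)) (continuousAt_pos1 hne) hdiff)
  · intro r hr
    rw [componentLift_of_mem (coe_mem_of_mem_Ioo hr), leftEnd_eq_of_mem_Ioo hU hp hr]

/-- If the lift decreased inside one lifted component, the intermediate value theorem would
produce a point whose image leaves the arc spanned by the images of the endpoints. -/
lemma componentLift_le_of_lt_rightEnd (hU : IsOpen U) (hp : p ∉ U)
    (hoff : ∀ x ∉ U, φ x = x) (hφ : ∀ x ∈ U, MonotoneSelfMapOn φ (connectedComponentIn U x))
    (hs : (s : S1) ∈ U) (hst : s ≤ t) (ht : t < rightEnd U s) :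
    componentLift U φ s ≤ componentLift U φ t := by
  have hsub : Icc s t ⊆ Ioo (leftEnd U s) (rightEnd U s) := fun r hr =>
    ⟨(leftEnd_lt hU hp hs).trans_le hr.1, hr.2.trans_lt ht⟩
  have hC := fun r (hr : r ∈ Icc s t) => coe_mem_connectedComponentIn hU hp hs (hsub hr)
  by_contra! hlt
  obtain ⟨y, hy, hFy⟩ := intermediate_value_Icc' hst
    ((continuousOn_componentLift hU hp hφ hs).mono hsub)
    (show (componentLift U φ t + componentLift U φ s) / 2 ∈
      Icc (componentLift U φ t) (componentLift U φ s) from ⟨by linarith, by linarith⟩)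
  have hFs := componentLift_mem_Ioo hU hp hφ hs
  have hFt := componentLift_mem_Ioo hU hp hφ (coe_mem_of_mem_Ioo (hsub ⟨hst, le_rfl⟩))
  rw [leftEnd_eq_of_mem_Ioo hU hp (hsub ⟨hst, le_rfl⟩)] at hFt
  have hB := rightEnd_le_leftEnd_add_one hU hp s
  have hmono := (hφ s hs).weaklyMonotoneOn _ (hC s ⟨le_rfl, hst⟩) _ (hC y hy) _
    (hC t ⟨hst, le_rfl⟩) (coe_mem_cArc hy.1 hy.2 (by linarith [leftEnd_lt hU hp hs]))
  rw [← isLiftOf_componentLift hoff, ← isLiftOf_componentLift hoff,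
    ← isLiftOf_componentLift hoff] at hmono
  exact (not_mem_cArc_iff (coe_ne_coe_of_lt hlt (by linarith [hFt.1, hFs.2])).symm).mpr
    (coe_mem_oArc (by linarith) (by linarith) (by linarith [hFt.1, hFs.2])) hmono

lemma componentLift_monotone (hU : IsOpen U) (hp : p ∉ U) (hoff : ∀ x ∉ U, φ x = x)
    (hφ : ∀ x ∈ U, MonotoneSelfMapOn φ (connectedComponentIn U x)) :
    Monotone (componentLift U φ) := by
  intro s t hst
  by_cases hs : (s : S1) ∈ U
  · rcases lt_or_ge t (rightEnd U s) with ht | ht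
    · exact componentLift_le_of_lt_rightEnd hU hp hoff hφ hs hst ht
    · have hB := (rightEnd_spec hU hp s)
      exact (componentLift_le hU hp hφ hB.1 hB.2).trans (le_componentLift hU hp hφ ht hB.2)
  · exact (componentLift_le hU hp hφ le_rfl hs).trans (le_componentLift hU hp hφ hst hs)

lemma componentLift_surjective (hU : IsOpen U) (hp : p ∉ U)
    (hφ : ∀ x ∈ U, MonotoneSelfMapOn φ (connectedComponentIn U x)) :
    Function.Surjective (componentLift U φ) := by
  intro v
  by_cases hv : (v : S1) ∈ U
  · obtain ⟨x, hx, hxv⟩ := (hφ v hv).surjOn (mem_connectedComponentIn hv)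
    rw [← image_Ioo_eq_connectedComponentIn hU hp hv] at hx
    obtain ⟨u, hu, rfl⟩ := hx
    have hAu := leftEnd_eq_of_mem_Ioo hU hp hu
    refine ⟨u, componentLift_eq (coe_mem_of_mem_Ioo hu) ?_ ?_ hxv⟩ <;> rw [hAu]
    · exact (leftEnd_lt hU hp hv).le
    · exact (lt_rightEnd hU hp hv).trans_le (rightEnd_le_leftEnd_add_one hU hp v)
  · exact ⟨v, componentLift_of_not_mem hv⟩

end ComponentLift

theorem continuous_surjective_weaklyMonotone_of_components {U : Set S1} (hU : IsOpen U) {p : S1}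
    (hp : p ∉ U) {φ : S1 → S1} (hoff : ∀ x ∉ U, φ x = x)
    (hφ : ∀ x ∈ U, MonotoneSelfMapOn φ (connectedComponentIn U x)) :
    Continuous φ ∧ Function.Surjective φ ∧ ∀ x y z, y ∈ cArc x z → φ y ∈ cArc (φ x) (φ z) := by
  have hF := isLiftOf_componentLift hoff
  have hmono := componentLift_monotone hU hp hoff hφ
  have hsurj := componentLift_surjective hU hp hφ
  exact ⟨hF.continuous (hmono.continuous_of_surjective hsurj), hF.surjective hsurj,
    fun _ _ _ => hF.mem_cArc hmono (componentLift_add_one hU hp)⟩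

lemma homeo_mul_apply {X : Type*} [TopologicalSpace X] (f g : X ≃ₜ X) (x : X) :
    (f * g) x = f (g x) := rfl

lemma homeo_inv_apply {X : Type*} [TopologicalSpace X] (f : X ≃ₜ X) (x : X) :
    f⁻¹ x = f.symm x := rfl

lemma zpow_apply_semiconj {X : Type*} [TopologicalSpace X] {f g : X ≃ₜ X} {φ : X → X}
    {I : Set X} (hI : f '' I = I) (h : ∀ x ∈ I, g (φ x) = φ (f x)) (n : ℤ) :
    ∀ x ∈ I, (g ^ n) (φ x) = φ ((f ^ n) x) := by
  have hf : ∀ x ∈ I, f x ∈ I := fun x hx => hI ▸ mem_image_of_mem f hx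
  have hinv : ∀ x ∈ I, f.symm x ∈ I ∧ g.symm (φ x) = φ (f.symm x) := by
    intro x hx
    obtain ⟨a, ha, rfl⟩ := hI.symm ▸ hx
    simp [ha, ← h a ha]
  induction n using Int.induction_on with
  | zero => exact fun x _ => rfl
  | succ n ih =>
    intro x hx
    rw [zpow_add_one, zpow_add_one, homeo_mul_apply, homeo_mul_apply, h x hx, ih _ (hf x hx)]
  | pred n ih =>
    intro x hx
    rw [zpow_sub_one, zpow_sub_one, homeo_mul_apply, homeo_mul_apply, homeo_inv_apply,
      homeo_inv_apply, (hinv x hx).2, ih _ (hinv x hx).1]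

section Gaps

variable {μ : Set S1}

lemma Gap.subset_compl (J : Gap μ) : (J : Set S1) ⊆ μᶜ := by
  obtain ⟨x, -, hJ⟩ := J.2
  exact hJ ▸ connectedComponentIn_subset _ _

lemma Gap.isOpen (hμ : IsClosed μ) (J : Gap μ) : IsOpen (J : Set S1) := by
  obtain ⟨x, -, hJ⟩ := J.2
  exact hJ ▸ hμ.isOpen_compl.connectedComponentIn

lemma Gap.connectedComponentIn_eq {U : Set S1} (J : Gap μ) (hJU : (J : Set S1) ⊆ U)
    (hUμ : U ⊆ μᶜ) {x : S1} (hx : x ∈ (J : Set S1)) : connectedComponentIn U x = J := by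
  obtain ⟨y, -, hJ⟩ := J.2
  have hJx : (J : Set S1) = connectedComponentIn μᶜ x :=
    hJ.trans (_root_.connectedComponentIn_eq (show x ∈ connectedComponentIn μᶜ y from hJ ▸ hx))
  refine subset_antisymm ((connectedComponentIn_mono x hUμ).trans hJx.symm.subset) ?_
  exact (hJx ▸ isPreconnected_connectedComponentIn).subset_connectedComponentIn hx hJU

lemma Gap.eq_of_mem {I J : Gap μ} {x : S1} (hI : x ∈ (I : Set S1)) (hJ : x ∈ (J : Set S1)) :
    I = J :=
  Subtype.ext <| (I.connectedComponentIn_eq I.subset_compl subset_rfl hI).symm.trans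
    (J.connectedComponentIn_eq J.subset_compl subset_rfl hJ)

lemma gapOrbit_subset_compl {Γ : Type*} [Group Γ] (σg : Γ →* Equiv.Perm (Gap μ)) (I₀ : Gap μ) :
    gapOrbit σg I₀ ⊆ μᶜ :=
  iUnion_subset fun γ => (σg γ I₀).subset_compl

lemma connectedComponentIn_gapOrbit {Γ : Type*} [Group Γ] {σg : Γ →* Equiv.Perm (Gap μ)}
    {I₀ : Gap μ} {γ : Γ} {x : S1} (hx : x ∈ (σg γ I₀ : Set S1)) :
    connectedComponentIn (gapOrbit σg I₀) x = σg γ I₀ :=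
  (σg γ I₀).connectedComponentIn_eq (subset_iUnion (fun γ => (σg γ I₀ : Set S1)) γ)
    (gapOrbit_subset_compl σg I₀) hx

end Gaps

section EquivariantExtension

variable {Γ : Type*} [Group Γ] {μ : Set S1} {σg : Γ →* Equiv.Perm (Gap μ)} {I₀ : Gap μ}
  {ρ ρ₁ ρ₂ : Γ →* (S1 ≃ₜ S1)} {φ₀ : S1 → S1} {c γ : Γ} {x : S1}

lemma rep_apply_mem_gap (hρ : ∀ (γ : Γ) (I : Gap μ), (σg γ I : Set S1) = ρ γ '' I)
    (hx : x ∈ (σg γ I₀ : Set S1)) (δ : Γ) : ρ δ x ∈ (σg (δ * γ) I₀ : Set S1) := by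
  rw [map_mul, Equiv.Perm.mul_apply, hρ δ]
  exact mem_image_of_mem _ hx

lemma rep_inv_apply_mem (hρ : ∀ (γ : Γ) (I : Gap μ), (σg γ I : Set S1) = ρ γ '' I)
    (hx : x ∈ (σg γ I₀ : Set S1)) : ρ γ⁻¹ x ∈ (I₀ : Set S1) := by
  simpa using rep_apply_mem_gap hρ hx γ⁻¹

open Classical in
/-- The value does not depend on the chosen `γ` once the stabilizer of `I₀` is generated by some
`c` with `φ₀` semiconjugating `ρ₁ c` to `ρ₂ c` on `I₀` (`equivariantExtension_eq`). -/
def equivariantExtension (σg : Γ →* Equiv.Perm (Gap μ)) (I₀ : Gap μ) (ρ₁ ρ₂ : Γ →* (S1 ≃ₜ S1))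
    (φ₀ : S1 → S1) (x : S1) : S1 :=
  if h : ∃ γ, x ∈ (σg γ I₀ : Set S1) then ρ₂ h.choose (φ₀ (ρ₁ h.choose⁻¹ x)) else x

lemma equivariantExtension_of_not_mem (hx : x ∉ gapOrbit σg I₀) :
    equivariantExtension σg I₀ ρ₁ ρ₂ φ₀ x = x :=
  dif_neg fun h => hx (mem_iUnion.mpr h)

lemma equivariantExtension_eq (hρ₁ : ∀ (γ : Γ) (I : Gap μ), (σg γ I : Set S1) = ρ₁ γ '' I)
    (hstab : gapStab σg I₀ = Subgroup.zpowers c)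
    (hsc : ∀ x ∈ (I₀ : Set S1), ρ₂ c (φ₀ x) = φ₀ (ρ₁ c x)) (hx : x ∈ (σg γ I₀ : Set S1)) :
    equivariantExtension σg I₀ ρ₁ ρ₂ φ₀ x = ρ₂ γ (φ₀ (ρ₁ γ⁻¹ x)) := by
  have h : ∃ γ, x ∈ (σg γ I₀ : Set S1) := ⟨γ, hx⟩
  rw [equivariantExtension, dif_pos h]
  set δ := h.choose
  have hδ : x ∈ (σg δ I₀ : Set S1) := h.choose_spec
  have hstabδγ : δ⁻¹ * γ ∈ gapStab σg I₀ := by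
    show σg (δ⁻¹ * γ) I₀ = I₀
    rw [map_mul, Equiv.Perm.mul_apply, Gap.eq_of_mem hx hδ, ← Equiv.Perm.mul_apply, ← map_mul,
      inv_mul_cancel, map_one, Equiv.Perm.one_apply]
  obtain ⟨n, hn⟩ := Subgroup.mem_zpowers_iff.mp (hstab ▸ hstabδγ)
  have hcI : c ∈ gapStab σg I₀ := hstab ▸ Subgroup.mem_zpowers c
  have hc : ρ₁ c '' I₀ = I₀ := by
    rw [← hρ₁, show σg c I₀ = I₀ from hcI]
  have hu := rep_inv_apply_mem hρ₁ hx
  have hδx : ρ₁ δ⁻¹ x = ρ₁ (c ^ n) (ρ₁ γ⁻¹ x) := by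
    rw [← homeo_mul_apply, ← map_mul, hn, mul_assoc, mul_inv_cancel, mul_one]
  rw [hδx, map_zpow, ← zpow_apply_semiconj hc hsc n _ hu, ← map_zpow, ← homeo_mul_apply,
    ← map_mul, hn, mul_inv_cancel_left]

lemma equivariantExtension_eqOn (hρ₁ : ∀ (γ : Γ) (I : Gap μ), (σg γ I : Set S1) = ρ₁ γ '' I)
    (hstab : gapStab σg I₀ = Subgroup.zpowers c)
    (hsc : ∀ x ∈ (I₀ : Set S1), ρ₂ c (φ₀ x) = φ₀ (ρ₁ c x)) :
    EqOn (equivariantExtension σg I₀ ρ₁ ρ₂ φ₀) φ₀ I₀ := fun x hx => by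
  rw [equivariantExtension_eq (γ := 1) hρ₁ hstab hsc (by rwa [map_one]), inv_one, map_one,
    map_one]
  rfl

lemma equivariantExtension_apply_rep (hρ₁ : ∀ (γ : Γ) (I : Gap μ), (σg γ I : Set S1) = ρ₁ γ '' I)
    (hstab : gapStab σg I₀ = Subgroup.zpowers c)
    (hsc : ∀ x ∈ (I₀ : Set S1), ρ₂ c (φ₀ x) = φ₀ (ρ₁ c x))
    (hoff : ∀ γ x, x ∉ gapOrbit σg I₀ → ρ₁ γ x = ρ₂ γ x) (δ : Γ) (x : S1) :
    equivariantExtension σg I₀ ρ₁ ρ₂ φ₀ (ρ₁ δ x) =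
      ρ₂ δ (equivariantExtension σg I₀ ρ₁ ρ₂ φ₀ x) := by
  by_cases hx : x ∈ gapOrbit σg I₀
  · obtain ⟨γ, hγ⟩ := mem_iUnion.mp hx
    rw [equivariantExtension_eq hρ₁ hstab hsc (rep_apply_mem_gap hρ₁ hγ δ),
      equivariantExtension_eq hρ₁ hstab hsc hγ, ← homeo_mul_apply (ρ₁ _), ← map_mul, mul_inv_rev,
      inv_mul_cancel_right, map_mul, homeo_mul_apply]
  · have hδx : ρ₁ δ x ∉ gapOrbit σg I₀ := fun h => by
      obtain ⟨γ, hγ⟩ := mem_iUnion.mp h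
      refine hx (mem_iUnion.mpr ⟨δ⁻¹ * γ, ?_⟩)
      simpa [← homeo_mul_apply, ← map_mul] using rep_apply_mem_gap hρ₁ hγ δ⁻¹
    rw [equivariantExtension_of_not_mem hδx, equivariantExtension_of_not_mem hx, hoff δ x hx]

lemma monotoneSelfMapOn_equivariantExtension
    (hρ₁ : ∀ (γ : Γ) (I : Gap μ), (σg γ I : Set S1) = ρ₁ γ '' I)
    (hρ₂ : ∀ (γ : Γ) (I : Gap μ), (σg γ I : Set S1) = ρ₂ γ '' I)
    (hstab : gapStab σg I₀ = Subgroup.zpowers c)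
    (hsc : ∀ x ∈ (I₀ : Set S1), ρ₂ c (φ₀ x) = φ₀ (ρ₁ c x)) (hφ₀ : MonotoneSelfMapOn φ₀ I₀)
    (horient : ∀ γ, (OrientPres (ρ₁ γ) ∧ OrientPres (ρ₂ γ)) ∨
      (OrientRev (ρ₁ γ) ∧ OrientRev (ρ₂ γ))) (γ : Γ) :
    MonotoneSelfMapOn (equivariantExtension σg I₀ ρ₁ ρ₂ φ₀) (σg γ I₀) := by
  have h := hφ₀.conj ((hρ₂ γ I₀).symm.trans (hρ₁ γ I₀)) (horient γ)
  rw [← hρ₁ γ I₀] at h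
  refine h.congr fun x hx => ?_
  rw [equivariantExtension_eq hρ₁ hstab hsc hx, map_inv]
  rfl

end EquivariantExtension

end PAFlow

open PAFlow in
theorem statement3_general {Γ : Type} [Group Γ] (P : OrbifoldPresentation Γ)
    (ρ : Γ →* (S1 ≃ₜ S1)) (μ : Set S1) (k : ℕ)
    (T : TauData μ k) (σg : Γ →* Equiv.Perm (Gap μ))
    (I₀ : Gap μ)
    (i : Fin P.q) (hstab : gapStab σg I₀ = Subgroup.zpowers (P.c i))
    (f₀ g₀ : S1 → S1)
    (φ₀ : S1 → S1)
    (hφ₀cont : ContinuousOn φ₀ (I₀ : Set S1))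
    (hφ₀maps : Set.MapsTo φ₀ (I₀ : Set S1) (I₀ : Set S1))
    (hφ₀surj : Set.SurjOn φ₀ (I₀ : Set S1) (I₀ : Set S1))
    (hφ₀mono : ∀ x ∈ (I₀ : Set S1), ∀ y ∈ (I₀ : Set S1), ∀ z ∈ (I₀ : Set S1),
      y ∈ cArc x z → φ₀ y ∈ cArc (φ₀ x) (φ₀ z))
    (hsemiconj : ∀ x ∈ (I₀ : Set S1), g₀ (φ₀ x) = φ₀ (f₀ x))
    (ρ'₁ ρ'₂ : Γ →* (S1 ≃ₜ S1))
    (h₁ : IsModification ρ ρ'₁ μ k T σg I₀ (P.c i) f₀)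
    (h₂ : IsModification ρ ρ'₂ μ k T σg I₀ (P.c i) g₀) :
    ∃ φ : S1 → S1,
      Continuous φ ∧ Function.Surjective φ ∧
      (∀ x y z : S1, y ∈ cArc x z → φ y ∈ cArc (φ x) (φ z)) ∧
      (∀ x ∈ (I₀ : Set S1), φ x = φ₀ x) ∧
      (∀ x : S1, x ∉ gapOrbit σg I₀ → φ x = x) ∧
      (∀ (γ : Γ) (x : S1), φ (ρ'₁ γ x) = ρ'₂ γ (φ x)) := by
  have hrep₁ := h₁.rep'
  have hsc : ∀ x ∈ (I₀ : Set S1), ρ'₂ (P.c i) (φ₀ x) = φ₀ (ρ'₁ (P.c i) x) := fun x hx => by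
    rw [h₂.on_gap _ (hφ₀maps hx), hsemiconj x hx, h₁.on_gap x hx]
  have hoff : ∀ γ x, x ∉ gapOrbit σg I₀ → ρ'₁ γ x = ρ'₂ γ x := fun γ x hx =>
    (h₁.eq_off γ x hx).trans (h₂.eq_off γ x hx).symm
  have horient : ∀ γ, (OrientPres (ρ'₁ γ) ∧ OrientPres (ρ'₂ γ)) ∨
      (OrientRev (ρ'₁ γ) ∧ OrientRev (ρ'₂ γ)) := fun γ =>
    sameOrientation_of_eqOn (hrep₁.orient γ) (h₂.rep'.orient γ) hrep₁.perfect hrep₁.nonempty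
      fun x hx => hoff γ x fun h => gapOrbit_subset_compl σg I₀ h hx
  have hgap := monotoneSelfMapOn_equivariantExtension hrep₁.gapAct h₂.rep'.gapAct hstab hsc
    ⟨hφ₀maps, hφ₀surj, hφ₀cont, hφ₀mono⟩ horient
  have hU : IsOpen (gapOrbit σg I₀) := isOpen_iUnion fun γ => (σg γ I₀).isOpen hrep₁.perfect.closed
  obtain ⟨p, hp⟩ := hrep₁.nonempty
  obtain ⟨hcont, hsurj, hmono⟩ := continuous_surjective_weaklyMonotone_of_components hU
    (φ := equivariantExtension σg I₀ ρ'₁ ρ'₂ φ₀) (fun h => gapOrbit_subset_compl σg I₀ h hp)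
    (fun _ => equivariantExtension_of_not_mem) fun x hx => by
      obtain ⟨γ, hγ⟩ := mem_iUnion.mp hx
      rw [connectedComponentIn_gapOrbit hγ]
      exact hgap γ
  exact ⟨_, hcont, hsurj, hmono, equivariantExtension_eqOn hrep₁.gapAct hstab hsc,
    fun _ => equivariantExtension_of_not_mem,
    equivariantExtension_apply_rep hrep₁.gapAct hstab hsc hoff⟩

open PAFlow in
/-- modifications by semi-conjugate gap maps are semi-conjugate, by a
continuous surjective weakly monotone degree-one map extending the given semi-conjugacy
on the gap and equal to the identity off the orbit `𝔍` of the gap. -/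
theorem statement3 {Γ : Type} [Group Γ] (P : OrbifoldPresentation Γ)
    (ρ : Γ →* (S1 ≃ₜ S1)) (μ : Set S1) (k : ℕ)
    (T : TauData μ k) (σg : Γ →* Equiv.Perm (Gap μ))
    (hrep : IsMTSRep ρ μ k T σg)
    (I₀ : Gap μ) (hper : gapStab σg I₀ ≠ ⊥)
    (i : Fin P.q) (hstab : gapStab σg I₀ = Subgroup.zpowers (P.c i))
    (f₀ g₀ : S1 → S1)
    (hf₀ : IsClosureHomeo f₀ (I₀ : Set S1)) (hg₀ : IsClosureHomeo g₀ (I₀ : Set S1))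
    (hbdf : ∀ x ∈ frontier (I₀ : Set S1), f₀ x = ρ (P.c i) x)
    (hbdg : ∀ x ∈ frontier (I₀ : Set S1), g₀ x = ρ (P.c i) x)
    (φ₀ : S1 → S1)
    (hφ₀cont : ContinuousOn φ₀ (I₀ : Set S1))
    (hφ₀maps : Set.MapsTo φ₀ (I₀ : Set S1) (I₀ : Set S1))
    (hφ₀surj : Set.SurjOn φ₀ (I₀ : Set S1) (I₀ : Set S1))
    (hφ₀mono : ∀ x ∈ (I₀ : Set S1), ∀ y ∈ (I₀ : Set S1), ∀ z ∈ (I₀ : Set S1),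
      y ∈ cArc x z → φ₀ y ∈ cArc (φ₀ x) (φ₀ z))
    (hsemiconj : ∀ x ∈ (I₀ : Set S1), g₀ (φ₀ x) = φ₀ (f₀ x))
    (ρ'₁ ρ'₂ : Γ →* (S1 ≃ₜ S1))
    (h₁ : IsModification ρ ρ'₁ μ k T σg I₀ (P.c i) f₀)
    (h₂ : IsModification ρ ρ'₂ μ k T σg I₀ (P.c i) g₀) :
    ∃ φ : S1 → S1,
      Continuous φ ∧ Function.Surjective φ ∧
      (∀ x y z : S1, y ∈ cArc x z → φ y ∈ cArc (φ x) (φ z)) ∧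
      (∀ x ∈ (I₀ : Set S1), φ x = φ₀ x) ∧
      (∀ x : S1, x ∉ gapOrbit σg I₀ → φ x = x) ∧
      (∀ (γ : Γ) (x : S1), φ (ρ'₁ γ x) = ρ'₂ γ (φ x)) :=
  statement3_general P ρ μ k T σg I₀ i hstab f₀ g₀ φ₀ hφ₀cont hφ₀maps hφ₀surj hφ₀mono hsemiconj ρ'₁
    ρ'₂ h₁ h₂
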